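/- With O9 = {3,5,6,9,15,19,23,24} an octad of the Golay code, the sublattice K̃ = { ν ∈ N : ⟨ν, f_n⟩ = 0 for all n ∉ O9 } of the Niemeier lattice N of type A_1^{24} is generated by the f_n with n ∈ O9 together with (1/2)Σ_{n ∈ O9} f_n. -/

import Mathlib

def indic (s : Finset ℕ) : Fin 24 → ZMod 2 := fun i => if (i : ℕ) + 1 ∈ s then 1 else 0

def golayBasisSets : Fin 12 → Finset ℕ :=
  ![{1,2,16,18,5,12,22,3}, {7,4,19,10,12,15,8,16}, {23,3,9,19,13,18,8,11},
    {6,3,22,4,21,17,15,9}, {20,10,11,17,14,13,22,12}, {24,2,10,19,9,5,14,21},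
    {8,7,15,17,11,23,18,16}, {16,1,2,21,4,7,8,18}, {18,1,16,8,23,13,14,5},
    {8,7,15,9,19,23,4,22,13,18,1,16}, {18,23,13,22,3,1,11,10,2,16,7,8},
    {16,1,2,10,12,7,5,9,15,8,23,18}]

def golayCode : Submodule (ZMod 2) (Fin 24 → ZMod 2) :=
  Submodule.span (ZMod 2) (Set.range fun i => indic (golayBasisSets i))

/-- The ambient 24-dimensional rational quadratic space. -/
abbrev V24 := Fin 24 → ℚ

/-- The bilinear form on `V24` for which the standard basis vectors have norm 2. -/
def B24 (u v : V24) : ℚ := 2 * ∑ i, u i * v i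

/-- The generators `f_n` of the root sublattice `R` of type `A₁²⁴`. -/
def f24 (n : Fin 24) : V24 := fun i => if i = n then 1 else 0

/-- The Niemeier lattice `N` of type `A₁²⁴`:
`N = { v ∈ (1/2)R : (v mod R) ∈ 𝒢₂₄ }`. -/
def NSet : Set V24 :=
  { v | ∃ w : Fin 24 → ℤ, (∀ i, v i = (w i : ℚ) / 2) ∧
      (fun i => ((w i : ZMod 2))) ∈ golayCode }


/-- The weight of a vector in `𝔽₂²⁴`: the number of nonzero coordinates. -/
def weight (v : Fin 24 → ZMod 2) : ℕ := (Finset.univ.filter fun i => v i ≠ 0).card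

/-- The special octad `𝒪₉ = {3,5,6,9,15,19,23,24}` (as a set of labels in `{1,…,24}`). -/
def O9 : Finset ℕ := {3, 5, 6, 9, 15, 19, 23, 24}

/-- `Π̃ = { ν ∈ N : ⟨ν, f_n⟩ = 0 for all n ∈ 𝒪₉ }`. -/
def PiTilde : Set V24 :=
  { ν | ν ∈ NSet ∧ ∀ n : Fin 24, (n : ℕ) + 1 ∈ O9 → B24 ν (f24 n) = 0 }

/-- `K̃ = { ν ∈ N : ⟨ν, f_n⟩ = 0 for all n ∉ 𝒪₉ }`. -/
def KTilde : Set V24 :=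
  { ν | ν ∈ NSet ∧ ∀ n : Fin 24, (n : ℕ) + 1 ∉ O9 → B24 ν (f24 n) = 0 }

/-- The half sum `(1/2) Σ_{n ∈ 𝒪₉} f_n`. -/
def halfO9 : V24 := (2 : ℚ)⁻¹ • ∑ n ∈ Finset.univ.filter (fun n : Fin 24 => (n : ℕ) + 1 ∈ O9), f24 n

/-! A vector `ν ∈ K̃` is `w / 2` with `w` integral and zero off `𝒪₉`, and `w mod 2` is a Golay
codeword `c`; so `c` is supported in `𝒪₉`, hence is `0` or the octad itself. In the first case
`ν`, in the second `ν - ½ Σ_{n ∈ 𝒪₉} f_n`, has integer coordinates supported on `𝒪₉`, i.e. is an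
integral combination of the `f_n`, `n ∈ 𝒪₉`. Conversely `K̃` is a `ℤ`-module containing the
generators. -/

theorem golayCode_eq_zero_or_indic_O9 {c : Fin 24 → ZMod 2} (hc : c ∈ golayCode)
    (hsupp : ∀ i : Fin 24, (i : ℕ) + 1 ∉ O9 → c i = 0) : c = 0 ∨ c = indic O9 := by
  obtain ⟨ε, rfl⟩ := (Submodule.mem_span_range_iff_exists_fun (ZMod 2)).mp hc
  -- The 16 coordinates off `𝒪₉` are linear equations over `𝔽₂` in `ε`, whose solutions are the
  -- multiples of the coefficient vector of the octad `𝒪₉` itself.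
  have hε : ε = ![ε 0, ε 0, ε 0, ε 0, 0, ε 0, ε 0, 0, ε 0, 0, 0, 0] := by
    simp [Fin.forall_fin_succ, Fin.sum_univ_succ, golayBasisSets, indic, O9] at hsupp
    obtain ⟨h1, h2, h3, h4, h5, h6, h7, h8, h9, h10, h11⟩ : ε 1 = ε 0 ∧ ε 2 = ε 0 ∧ ε 3 = ε 0 ∧
        ε 4 = 0 ∧ ε 5 = ε 0 ∧ ε 6 = ε 0 ∧ ε 7 = 0 ∧ ε 8 = ε 0 ∧ ε 9 = 0 ∧ ε 10 = 0 ∧ ε 11 = 0 := by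
      grind
    funext j; fin_cases j <;> simp [*]
  rw [hε]
  generalize ε 0 = a
  revert a
  decide

theorem indic_O9_mem_golayCode : indic O9 ∈ golayCode :=
  (Submodule.mem_span_range_iff_exists_fun (ZMod 2)).mpr
    ⟨![1, 1, 1, 1, 0, 1, 1, 0, 1, 0, 0, 0], by decide⟩

theorem B24_f24 (v : V24) (n : Fin 24) : B24 v (f24 n) = 2 * v n := by
  simp [B24, f24]

theorem halfO9_apply (i : Fin 24) : halfO9 i = if (i : ℕ) + 1 ∈ O9 then 1 / 2 else 0 := by
  by_cases hi : (i : ℕ) + 1 ∈ O9 <;> simp [halfO9, f24, Finset.sum_apply, hi]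

def nSubmodule : Submodule ℤ V24 where
  carrier := NSet
  zero_mem' := ⟨0, by simp, by convert golayCode.zero_mem; simp⟩
  add_mem' := by
    rintro a b ⟨w, hw, hgw⟩ ⟨u, hu, hgu⟩
    refine ⟨w + u, fun i => ?_, by convert golayCode.add_mem hgw hgu using 1; ext; simp⟩
    simp [hw i, hu i, add_div]
  smul_mem' := by
    rintro z a ⟨w, hw, hgw⟩
    refine ⟨z • w, fun i => ?_, by convert golayCode.smul_mem (z : ZMod 2) hgw using 1; ext; simp⟩
    simp [hw i, mul_div_assoc]

theorem intCast_mem_NSet (u : Fin 24 → ℤ) : (fun i => (u i : ℚ)) ∈ NSet :=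
  ⟨2 • u, fun i => by simp, by
    convert golayCode.zero_mem using 1; ext; simp [show (2 : ZMod 2) = 0 from rfl]⟩

theorem mem_KTilde_iff {v : V24} :
    v ∈ KTilde ↔ v ∈ NSet ∧ ∀ n : Fin 24, (n : ℕ) + 1 ∉ O9 → v n = 0 := by
  simp [KTilde, B24_f24]

def kTildeSubmodule : Submodule ℤ V24 where
  carrier := KTilde
  zero_mem' := mem_KTilde_iff.2 ⟨nSubmodule.zero_mem, fun _ _ => rfl⟩
  add_mem' {a b} ha hb := by
    rw [mem_KTilde_iff] at *
    exact ⟨nSubmodule.add_mem ha.1 hb.1, fun n hn => by simp [ha.2 n hn, hb.2 n hn]⟩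
  smul_mem' z a ha := by
    rw [mem_KTilde_iff] at *
    exact ⟨nSubmodule.smul_mem z ha.1, fun n hn => by simp [ha.2 n hn]⟩

theorem halfO9_mem_KTilde : halfO9 ∈ KTilde := by
  refine mem_KTilde_iff.2 ⟨⟨fun i => if (i : ℕ) + 1 ∈ O9 then 1 else 0, fun i => ?_, ?_⟩,
    fun n hn => by simp [halfO9_apply, hn]⟩
  · by_cases hi : (i : ℕ) + 1 ∈ O9 <;> simp [halfO9_apply, hi]
  · convert indic_O9_mem_golayCode using 1; ext; simp [indic, apply_ite]

theorem f24_mem_KTilde {n : Fin 24} (hn : (n : ℕ) + 1 ∈ O9) : f24 n ∈ KTilde := by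
  refine mem_KTilde_iff.2 ⟨?_, fun m hm => ?_⟩
  · convert intCast_mem_NSet (fun i => if i = n then 1 else 0) using 1; ext; simp [f24]
  · simp [f24, show m ≠ n by rintro rfl; exact hm hn]

theorem intCast_mem_span_f24 (u : Fin 24 → ℤ) (hu : ∀ n : Fin 24, (n : ℕ) + 1 ∉ O9 → u n = 0) :
    (fun i => (u i : ℚ)) ∈
      Submodule.span ℤ { v | ∃ n : Fin 24, (n : ℕ) + 1 ∈ O9 ∧ v = f24 n } := by
  have hsum : (fun i => (u i : ℚ)) = ∑ n, u n • f24 n := by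
    ext i; simp [f24, Finset.sum_apply]
  rw [hsum]
  refine Submodule.sum_mem _ fun n _ => ?_
  by_cases hn : (n : ℕ) + 1 ∈ O9
  · exact Submodule.smul_mem _ _ (Submodule.subset_span ⟨n, hn, rfl⟩)
  · simp [hu n hn]

theorem sub_half_mem_span_f24 {v : V24} {w r : Fin 24 → ℤ} (hw : ∀ i, v i = w i / 2)
    (hwr : ∀ i, (w i : ZMod 2) = r i) (hsupp : ∀ n : Fin 24, (n : ℕ) + 1 ∉ O9 → w n = r n) :
    v - (fun i => (r i : ℚ) / 2) ∈
      Submodule.span ℤ { v | ∃ n : Fin 24, (n : ℕ) + 1 ∈ O9 ∧ v = f24 n } := by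
  have hdvd (i : Fin 24) : (2 : ℤ) ∣ w i - r i :=
    (ZMod.intCast_eq_intCast_iff_dvd_sub _ _ 2).1 (hwr i).symm
  convert intCast_mem_span_f24 (fun i => (w i - r i) / 2) (fun n hn => by simp [hsupp n hn])
    using 1
  ext i
  simp [hw i, Int.cast_div (hdvd i), sub_div]

theorem KTilde_subset_span :
    KTilde ⊆ Submodule.span ℤ
      (insert halfO9 { v | ∃ n : Fin 24, (n : ℕ) + 1 ∈ O9 ∧ v = f24 n }) := by
  intro v hv
  obtain ⟨⟨w, hw, hgw⟩, hv0⟩ := mem_KTilde_iff.1 hv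
  have hw0 (n : Fin 24) (hn : (n : ℕ) + 1 ∉ O9) : w n = 0 := by
    have h := hw n
    rw [hv0 n hn, eq_div_iff two_ne_zero, zero_mul] at h
    exact_mod_cast h.symm
  have hspan := Submodule.span_mono (R := ℤ) (Set.subset_insert halfO9
    { v | ∃ n : Fin 24, (n : ℕ) + 1 ∈ O9 ∧ v = f24 n })
  rcases golayCode_eq_zero_or_indic_O9 hgw (fun i hi => by simp [hw0 i hi]) with hc | hc
  · have h := sub_half_mem_span_f24 (r := 0) hw (fun i => by simpa using congrFun hc i)
      (by simpa using hw0)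
    simpa [← Pi.zero_def] using hspan h
  · have h := sub_half_mem_span_f24 (r := fun i => if (i : ℕ) + 1 ∈ O9 then 1 else 0) hw
      (fun i => by simpa [indic, apply_ite] using congrFun hc i)
      (fun n hn => by simp [hn, hw0 n hn])
    have hhalf : (fun i : Fin 24 => ((if (i : ℕ) + 1 ∈ O9 then 1 else 0 : ℤ) : ℚ) / 2) =
        halfO9 := by
      ext i; by_cases hi : (i : ℕ) + 1 ∈ O9 <;> simp [halfO9_apply, hi]
    rw [hhalf] at h
    simpa using add_mem (Submodule.subset_span (Set.mem_insert _ _)) (hspan h)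

/-- The sublattice `K̃ = { ν ∈ N : ⟨ν, f_n⟩ = 0 for all n ∉ 𝒪₉ }` of the Niemeier
lattice `N` of type `A₁²⁴` is generated by the `f_n` with `n ∈ 𝒪₉` together with
`(1/2) Σ_{n ∈ 𝒪₉} f_n`. -/
theorem kTilde_generators :
    KTilde = ↑(Submodule.span ℤ
      (insert halfO9 { v | ∃ n : Fin 24, (n : ℕ) + 1 ∈ O9 ∧ v = f24 n })) := by
  refine Set.Subset.antisymm KTilde_subset_span ?_
  refine (Submodule.span_le (p := kTildeSubmodule)).2 (Set.insert_subset halfO9_mem_KTilde ?_)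
  rintro _ ⟨n, hn, rfl⟩
  exact f24_mem_KTilde hn
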